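/- For the free Laplacian $-\Delta_G$ on a graph $G$ consisting of a finite connected graph $K$ with $N$ discrete half-lines attached, every generalized zero eigenfunction that decays at infinity along all rays (i.e. tends to $0$ along each $L_\alpha$) is identically zero: the bound eigenspace $\mathsf{E}$ at threshold $0$ is trivial. -/

import Mathlib

open Filter Finset

/-- The graph Laplacian `-Δ_G` on the graph `G = K ∪ L₁ ∪ ⋯ ∪ L_N` obtained by attaching
`N` discrete half-lines to a finite graph `K` at the vertices `x α`; `Sum.inr (α, n)`
denotes the `(n+1)`-st vertex of the ray `L_α`. -/
noncomputable def graphLap {K : Type*} [Fintype K] [DecidableEq K] (G : SimpleGraph K)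
    [DecidableRel G.Adj] {N : ℕ} (x : Fin N → K) (u : K ⊕ Fin N × ℕ → ℂ) :
    K ⊕ Fin N × ℕ → ℂ
  | Sum.inl k =>
      (∑ k' ∈ Finset.univ.filter (G.Adj k), (u (Sum.inl k) - u (Sum.inl k'))) +
        ∑ α : Fin N, if x α = k then u (Sum.inl k) - u (Sum.inr (α, 0)) else 0
  | Sum.inr (α, 0) => 2 * u (Sum.inr (α, 0)) - u (Sum.inr (α, 1)) - u (Sum.inl (x α))
  | Sum.inr (α, n + 1) =>
      2 * u (Sum.inr (α, n + 1)) - u (Sum.inr (α, n + 2)) - u (Sum.inr (α, n))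

/-!
On each ray the eigenvalue equation says that `u` is an arithmetic progression, and the only
arithmetic progression tending to `0` is `0`. The equation at the first vertex of a ray then
forces `u` to vanish at every attachment vertex, after which the equation on `K` says that
`u|_K` is harmonic for the Laplacian of `K`; as `K` is connected, `u|_K` is constant, and the
constant is `0`.
-/

open Matrix

theorem eq_zero_of_sub_eq_sub_of_tendsto_zero {E : Type*} [AddCommGroup E] [TopologicalSpace E]
    [IsTopologicalAddGroup E] [T2Space E] {a : ℕ → E}
    (hdiff : ∀ n, a (n + 2) - a (n + 1) = a (n + 1) - a n) (ha : Tendsto a atTop (nhds 0)) :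
    a = 0 := by
  have hconst_diff : ∀ n, a (n + 1) - a n = a 1 - a 0 := by
    intro n
    induction n with
    | zero => rfl
    | succ n ih => rw [hdiff, ih]
  have hdiff_tendsto : Tendsto (fun n => a (n + 1) - a n) atTop (nhds 0) := by
    simpa using (ha.comp (tendsto_add_atTop_nat 1)).sub ha
  have hd : a 1 - a 0 = 0 :=
    tendsto_nhds_unique (tendsto_const_nhds.congr fun n => (hconst_diff n).symm) hdiff_tendsto
  have hconst : ∀ n, a n = a 0 := by
    intro n
    induction n with
    | zero => rfl
    | succ n ih => rw [← ih, ← sub_eq_zero, hconst_diff, hd]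
  have h0 : a 0 = 0 :=
    tendsto_nhds_unique (tendsto_const_nhds.congr fun n => (hconst n).symm) ha
  funext n
  rw [hconst, h0, Pi.zero_apply]

namespace SimpleGraph

variable {V : Type*} [Fintype V] [DecidableEq V] (G : SimpleGraph V) [DecidableRel G.Adj]

theorem lapMatrix_mulVec_apply_eq_sum_sub {R : Type*} [NonAssocRing R] (v : V → R) (i : V) :
    (G.lapMatrix R *ᵥ v) i = ∑ j ∈ univ.filter (G.Adj i), (v i - v j) := by
  rw [lapMatrix_mulVec_apply, sum_sub_distrib, sum_const, ← neighborFinset_eq_filter,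
    card_neighborFinset_eq_degree, nsmul_eq_mul]

theorem lapMatrix_complex_mulVec_eq_zero_iff_forall_reachable {v : V → ℂ} :
    G.lapMatrix ℂ *ᵥ v = 0 ↔ ∀ i j : V, G.Reachable i j → v i = v j := by
  -- the Laplacian has integer entries, so it commutes with taking real and imaginary parts
  have hpart (f : ℂ →+ ℝ) :
      G.lapMatrix ℝ *ᵥ (f ∘ v) = 0 ↔ ∀ i, f ((G.lapMatrix ℂ *ᵥ v) i) = 0 := by
    simp only [funext_iff, lapMatrix_mulVec_apply_eq_sum_sub, map_sum, map_sub,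
      Function.comp_apply, Pi.zero_apply]
  have hre := hpart Complex.reAddGroupHom
  have him := hpart Complex.imAddGroupHom
  simp only [lapMatrix_mulVec_eq_zero_iff_forall_reachable, Function.comp_apply,
    Complex.coe_reAddGroupHom, Complex.coe_imAddGroupHom] at hre him
  simp only [funext_iff, Pi.zero_apply, Complex.ext_iff, Complex.zero_re, Complex.zero_im,
    forall_and]
  exact (hre.and him).symm

end SimpleGraph

/-- For the free Laplacian on a connected finite graph with attached half-lines, every
generalized zero eigenfunction decaying to `0` along each ray vanishes identically:
the bound eigenspace at the threshold `0` is trivial. -/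
theorem graphLap_no_bound_states
    {K : Type*} [Fintype K] [DecidableEq K] (G : SimpleGraph K) [DecidableRel G.Adj]
    (hconn : G.Connected) {N : ℕ} (hN : 1 ≤ N) (x : Fin N → K) :
    ∀ u : K ⊕ Fin N × ℕ → ℂ, (∀ p, graphLap G x u p = 0) →
      (∀ α : Fin N, Tendsto (fun n : ℕ => u (Sum.inr (α, n))) atTop (nhds 0)) →
      u = 0 := by
  intro u hu htend
  have hray : ∀ α n, u (Sum.inr (α, n)) = 0 := by
    intro α
    refine congrFun (eq_zero_of_sub_eq_sub_of_tendsto_zero (fun n => ?_) (htend α))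
    have h := hu (Sum.inr (α, n + 1))
    simp only [graphLap] at h
    linear_combination -h
  have hattach : ∀ α, u (Sum.inl (x α)) = 0 := by
    intro α
    have h := hu (Sum.inr (α, 0))
    simp only [graphLap, hray] at h
    linear_combination -h
  have hharm : G.lapMatrix ℂ *ᵥ (fun k => u (Sum.inl k)) = 0 := by
    funext k
    have h := hu (Sum.inl k)
    simp only [graphLap, hray, sub_zero] at h
    have hleg : ∑ α : Fin N, (if x α = k then u (Sum.inl k) else 0) = 0 :=
      sum_eq_zero fun α _ => by
        split_ifs with hα
        exacts [hα ▸ hattach α, rfl]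
    rw [G.lapMatrix_mulVec_apply_eq_sum_sub, Pi.zero_apply, ← h, hleg, add_zero]
  have hK : ∀ k, u (Sum.inl k) = 0 := fun k => by
    rw [← G.lapMatrix_complex_mulVec_eq_zero_iff_forall_reachable.mp hharm _ k
      (hconn (x ⟨0, hN⟩) k), hattach]
  funext p
  rcases p with k | ⟨α, n⟩
  exacts [hK k, hray α n]
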